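/- Let G=(V,E) be a connected simple graph not isomorphic to a star, and let G'=(V',E') = σ(G). If S1 ⊊ V' is such that G'[S1] is a proportionally dense subgraph, then there exists S2 ⊊ V' such that G'[S2] is a proportionally dense subgraph, |S2| ≥ |S1|, and M ∪ {z1,z2} ⊆ S2. -/

import Mathlib

/-!
An edge-vertex `e` of `σ(G)` misses exactly itself and the two endpoints of `e`. A vertex of a
PDS that is adjacent to everything outside it is adjacent to everything inside it, so a PDS
containing both endpoints of an edge misses that edge-vertex. If `B` is the `N`-part of a PDS `S1`,
each edge of `G` inside `B` therefore costs `S1` a clique vertex, and `|S1| ≤ 2 + |E| + |A|` for an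
independent set `A ⊆ B` obtained by deleting one endpoint of each edge inside `B`. The set
`M ∪ {z1, z2} ∪ A` is a PDS: `z1`, `z2` and `A` have no neighbour outside it, while an edge-vertex
misses one endpoint outside `A` and at most one inside, which suffices because
`|V ∖ A| ≤ |V| ≤ |E| + 1` for connected `G`.
-/

open SimpleGraph

/-- Number of neighbors of `v` inside `T`. -/
noncomputable def degIn {W : Type*} (G : SimpleGraph W) (T : Set W) (v : W) : ℕ :=
  (T ∩ G.neighborSet v).ncard

/-- `G[S]` is a proportionally dense subgraph. -/
def IsPDS {W : Type*} (G : SimpleGraph W) (S : Set W) : Prop :=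
  S ⊂ Set.univ ∧ 2 ≤ S.ncard ∧
    ∀ u ∈ S, degIn G Sᶜ u * (S.ncard - 1) ≤ degIn G S u * Sᶜ.ncard

/-- A star is a complete bipartite graph `K_{1,ℓ}`, `ℓ ≥ 1`. -/
def IsStar {V : Type*} (G : SimpleGraph V) : Prop :=
  ∃ ℓ : ℕ, 1 ≤ ℓ ∧ Nonempty (G ≃g completeBipartiteGraph Unit (Fin ℓ))

/-- Vertex type of the split graph `σ(G)`: `z1, z2` (the two booleans), `M` (edge
vertices), and `N = V`. -/
abbrev SigmaVert (V : Type*) (G : SimpleGraph V) : Type _ := (Bool ⊕ ↥G.edgeSet) ⊕ V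

/-- The split graph `σ(G)`. -/
def sigmaGraph {V : Type*} (G : SimpleGraph V) : SimpleGraph (SigmaVert V G) where
  Adj x y :=
    match x, y with
    | Sum.inl a, Sum.inl b => a ≠ b
    | Sum.inl (Sum.inr e), Sum.inr u => u ∉ (e : Sym2 V)
    | Sum.inr u, Sum.inl (Sum.inr e) => u ∉ (e : Sym2 V)
    | _, _ => False
  symm := by
    constructor
    rintro ((a | e) | u) ((b | f) | v) h <;> simp_all <;> tauto
  loopless := by
    constructor
    rintro ((a | e) | u) h <;> simp_all

/-- The set `M ∪ {z1, z2}` (the clique side) in `σ(G)`. -/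
def sigmaClique {V : Type*} (G : SimpleGraph V) : Set (SigmaVert V G) :=
  Set.range Sum.inl

/-- The set `M` of edge-vertices in `σ(G)`. -/
def sigmaM {V : Type*} (G : SimpleGraph V) : Set (SigmaVert V G) :=
  Set.range (fun e : ↥G.edgeSet => Sum.inl (Sum.inr e))

open Set

theorem SimpleGraph.exists_isIndepSet_subset_ncard_le {V : Type*} [Finite V] (G : SimpleGraph V)
    (B : Set V) :
    ∃ A ⊆ B, G.IsIndepSet A ∧
      B.ncard ≤ A.ncard + {e : G.edgeSet | (e : Sym2 V) ∈ B.sym2}.ncard := by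
  by_cases hB : G.IsIndepSet B
  · exact ⟨B, subset_rfl, hB, Nat.le_add_right _ _⟩
  obtain ⟨u, hu, v, hv, -, huv⟩ : ∃ u ∈ B, ∃ v ∈ B, u ≠ v ∧ G.Adj u v := by
    simpa [SimpleGraph.IsIndepSet, Set.Pairwise] using hB
  obtain ⟨A, hAB, hA, hcard⟩ := G.exists_isIndepSet_subset_ncard_le (B \ {u})
  have hedges : {e : G.edgeSet | (e : Sym2 V) ∈ (B \ {u}).sym2} ⊂
      {e : G.edgeSet | (e : Sym2 V) ∈ B.sym2} := by
    refine ssubset_iff_subset_ne.2 ⟨fun e he => ?_, fun h => ?_⟩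
    · exact mem_sym2_iff_subset.2 ((mem_sym2_iff_subset.1 he).trans sdiff_subset)
    · have : (⟨s(u, v), huv⟩ : G.edgeSet) ∈ {e : G.edgeSet | (e : Sym2 V) ∈ (B \ {u}).sym2} :=
        h ▸ show s(u, v) ∈ B.sym2 from ⟨hu, hv⟩
      exact this.1.2 rfl
  have := ncard_lt_ncard hedges
  have := ncard_sdiff_singleton_add_one hu
  exact ⟨A, hAB.trans sdiff_subset, hA, by omega⟩
termination_by B.ncard
decreasing_by exact ncard_sdiff_singleton_lt_of_mem hu

theorem IsPDS.sdiff_singleton_subset_neighborSet {W : Type*} [Finite W] {G : SimpleGraph W}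
    {S : Set W} {u : W} (h : IsPDS G S) (hu : u ∈ S) (hcompl : Sᶜ ⊆ G.neighborSet u) :
    S \ {u} ⊆ G.neighborSet u := by
  have hout : degIn G Sᶜ u = Sᶜ.ncard := by rw [degIn, inter_eq_left.2 hcompl]
  have hpos : 0 < Sᶜ.ncard := (nonempty_compl.2 h.1.ne).ncard_pos
  have hin : S.ncard - 1 ≤ degIn G S u :=
    Nat.le_of_mul_le_mul_right (by simpa only [hout, mul_comm] using h.2.2 u hu) hpos
  have hsub : S ∩ G.neighborSet u ⊆ S \ {u} := fun v ⟨hv, huv⟩ => ⟨hv, huv.ne.symm⟩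
  rw [← eq_of_subset_of_ncard_le hsub (by rwa [ncard_sdiff_singleton_of_mem hu])]
  exact inter_subset_right

theorem mul_pred_le_mul_of_lt {dout din o s : ℕ} (hout : dout < o) (hin : s ≤ din + 2)
    (hos : o < s) : dout * (s - 1) ≤ din * o := by
  obtain ⟨t, rfl⟩ : ∃ t, s = t + 1 := ⟨s - 1, by omega⟩
  rw [Nat.add_sub_cancel]
  nlinarith

section SigmaGraph

variable {V : Type*} (G : SimpleGraph V)

theorem sigmaGraph_neighborSet_inl_inr {e : G.edgeSet} {a b : V} (hab : (e : Sym2 V) = s(a, b)) :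
    (sigmaGraph G).neighborSet (Sum.inl (Sum.inr e)) =
      {Sum.inl (Sum.inr e), Sum.inr a, Sum.inr b}ᶜ := by
  ext ((c | f) | v)
  · simp [sigmaGraph]
  · simpa [sigmaGraph] using ne_comm
  · simp [sigmaGraph, hab]

theorem ncard_sigmaClique [Finite V] : (sigmaClique G).ncard = 2 + Nat.card G.edgeSet := by
  rw [sigmaClique, ← image_univ, ncard_image_of_injective _ Sum.inl_injective, ncard_univ,
    Nat.card_sum, Nat.card_eq_fintype_card (α := Bool), Fintype.card_bool]

theorem card_sigmaVert [Finite V] :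
    Nat.card (SigmaVert V G) = 2 + Nat.card G.edgeSet + Nat.card V := by
  rw [Nat.card_sum, Nat.card_sum, Nat.card_eq_fintype_card (α := Bool), Fintype.card_bool]

theorem ncard_sigmaClique_union_image_inr [Finite V] (A : Set V) :
    (sigmaClique G ∪ Sum.inr '' A).ncard = 2 + Nat.card G.edgeSet + A.ncard := by
  rw [ncard_union_eq, ncard_sigmaClique, ncard_image_of_injective _ Sum.inr_injective]
  exact Set.disjoint_left.2 fun x ⟨c, hc⟩ ⟨v, _, hv⟩ => Sum.inl_ne_inr (hc.trans hv.symm)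

variable {G}

theorem IsPDS.inl_inr_notMem [Finite V] {S : Set (SigmaVert V G)} (h : IsPDS (sigmaGraph G) S)
    {e : G.edgeSet} (he : (e : Sym2 V) ∈ (Sum.inr ⁻¹' S).sym2) : Sum.inl (Sum.inr e) ∉ S := by
  obtain ⟨⟨a, b⟩, hab⟩ := Quot.exists_rep (e : Sym2 V)
  replace hab : (e : Sym2 V) = s(a, b) := hab.symm
  rw [hab, Set.mk_mem_sym2_iff] at he
  intro heS
  have hT : {Sum.inl (Sum.inr e), Sum.inr a, Sum.inr b} ⊆ S :=
    insert_subset heS (insert_subset he.1 (singleton_subset_iff.2 he.2))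
  have hadj := h.sdiff_singleton_subset_neighborSet heS
    (by rw [sigmaGraph_neighborSet_inl_inr G hab]; exact compl_subset_compl.2 hT)
  rw [sigmaGraph_neighborSet_inl_inr G hab] at hadj
  exact hadj ⟨he.1, by simp⟩ (by simp)

theorem IsPDS.ncard_add_ncard_inner_edges_le [Finite V] {S : Set (SigmaVert V G)}
    (h : IsPDS (sigmaGraph G) S) :
    S.ncard + {e : G.edgeSet | (e : Sym2 V) ∈ (Sum.inr ⁻¹' S).sym2}.ncard ≤
      2 + Nat.card G.edgeSet + (Sum.inr ⁻¹' S).ncard := by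
  have hsplit : (S ∩ sigmaClique G).ncard + (Sum.inr ⁻¹' S).ncard = S.ncard := by
    have hN : S \ sigmaClique G = Sum.inr '' (Sum.inr ⁻¹' S) := by
      ext ((c | f) | v) <;> simp [sigmaClique]
    rw [← ncard_inter_add_ncard_sdiff_eq_ncard S (sigmaClique G), hN,
      ncard_image_of_injective _ Sum.inr_injective]
  have hmissing : {e : G.edgeSet | (e : Sym2 V) ∈ (Sum.inr ⁻¹' S).sym2}.ncard ≤
      (sigmaClique G \ S).ncard := by
    rw [← ncard_image_of_injective _ (Sum.inl_injective.comp Sum.inr_injective)]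
    exact ncard_le_ncard (by rintro _ ⟨e, he, rfl⟩; exact ⟨⟨_, rfl⟩, h.inl_inr_notMem he⟩)
  have hclique := ncard_inter_add_ncard_sdiff_eq_ncard (sigmaClique G) S
  rw [ncard_sigmaClique, inter_comm] at hclique
  omega

theorem isPDS_sigmaClique_union_image_inr [Finite V]
    (hcard : Nat.card V ≤ Nat.card G.edgeSet + 1) {A : Set V} (hA : G.IsIndepSet A)
    (hAu : A ≠ univ) : IsPDS (sigmaGraph G) (sigmaClique G ∪ Sum.inr '' A) := by
  set S := sigmaClique G ∪ Sum.inr '' A with hS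
  have hcompl : Sᶜ = Sum.inr '' Aᶜ := by
    ext ((c | f) | v) <;> simp [hS, sigmaClique]
  have hSc : Sᶜ.ncard = Aᶜ.ncard := by
    rw [hcompl, ncard_image_of_injective _ Sum.inr_injective]
  have hSn : S.ncard = 2 + Nat.card G.edgeSet + A.ncard := ncard_sigmaClique_union_image_inr G A
  have hAn := ncard_add_ncard_compl A
  have hpos : 0 < Aᶜ.ncard := (nonempty_compl.2 hAu).ncard_pos
  have hzero (x : SigmaVert V G) (hx : ∀ v, ¬ (sigmaGraph G).Adj x (Sum.inr v)) :
      degIn (sigmaGraph G) Sᶜ x = 0 := by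
    rw [degIn, hcompl, ncard_eq_zero, eq_empty_iff_forall_notMem]
    rintro _ ⟨⟨v, -, rfl⟩, hv⟩
    exact hx v hv
  refine ⟨ssubset_univ_iff.2 fun hSu => hpos.ne' ?_, by omega, ?_⟩
  · rw [← hSc, hSu, compl_univ, ncard_empty]
  rintro ((c | e) | u) -
  · simp [hzero (Sum.inl (Sum.inl c)) fun v hv => hv]
  · obtain ⟨w, hwA, hwe⟩ := IsIndepSet.nonempty_mem_compl_mem_edge G hA e.2
    have hN := sigmaGraph_neighborSet_inl_inr G (Sym2.other_spec hwe).symm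
    have hwS : Sum.inr w ∈ Sᶜ := hcompl ▸ mem_image_of_mem _ hwA
    have hout : degIn (sigmaGraph G) Sᶜ (Sum.inl (Sum.inr e)) < Sᶜ.ncard :=
      ncard_lt_ncard ((ssubset_iff_of_subset inter_subset_left).2
        ⟨_, hwS, fun hw => by rw [hN] at hw; exact hw.2 (by simp)⟩)
    have hin : S.ncard ≤ degIn (sigmaGraph G) S (Sum.inl (Sum.inr e)) + 2 := by
      have hsub : S \ (sigmaGraph G).neighborSet (Sum.inl (Sum.inr e)) ⊆
          {Sum.inl (Sum.inr e), Sum.inr (Sym2.Mem.other hwe)} := by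
        rw [hN, Set.sdiff_compl]
        rintro x ⟨hxS, rfl | rfl | rfl⟩
        · exact mem_insert _ _
        · exact absurd hxS hwS
        · exact mem_insert_of_mem _ rfl
      have := ncard_inter_add_ncard_sdiff_eq_ncard S
        ((sigmaGraph G).neighborSet (Sum.inl (Sum.inr e)))
      have := (ncard_le_ncard hsub).trans (ncard_insert_le _ _)
      rw [ncard_singleton] at this
      rw [degIn]
      omega
    exact mul_pred_le_mul_of_lt hout hin (by omega)
  · simp [hzero (Sum.inr u) fun v hv => hv]

end SigmaGraph

theorem sigma_pds_enlarge_general {V : Type*} [Fintype V] (G : SimpleGraph V)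
    (hconn : G.Connected)
    (S1 : Set (SigmaVert V G)) (h1 : IsPDS (sigmaGraph G) S1) :
    ∃ S2 : Set (SigmaVert V G),
      IsPDS (sigmaGraph G) S2 ∧ S1.ncard ≤ S2.ncard ∧ sigmaClique G ⊆ S2 := by
  obtain ⟨A, -, hA, hBA⟩ := G.exists_isIndepSet_subset_ncard_le (Sum.inr ⁻¹' S1)
  have hbound := h1.ncard_add_ncard_inner_edges_le
  obtain ⟨A', hA'A, hA'u, hS1A'⟩ :
      ∃ A' ⊆ A, A' ≠ univ ∧ S1.ncard ≤ 2 + Nat.card G.edgeSet + A'.ncard := by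
    by_cases hAu : A = univ
    · obtain ⟨v⟩ := hconn.nonempty
      have hS1 := ncard_lt_card h1.1.ne
      rw [card_sigmaVert] at hS1
      refine ⟨A \ {v}, sdiff_subset, fun h => (h.symm ▸ mem_univ v : v ∈ A \ {v}).2 rfl, ?_⟩
      rw [ncard_sdiff_singleton_of_mem (hAu ▸ mem_univ v), hAu, ncard_univ]
      omega
    · exact ⟨A, subset_rfl, hAu, by omega⟩
  refine ⟨sigmaClique G ∪ Sum.inr '' A', ?_, ?_, subset_union_left⟩
  · exact isPDS_sigmaClique_union_image_inr hconn.card_vert_le_card_edgeSet_add_one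
      (hA.mono hA'A) hA'u
  · rwa [ncard_sigmaClique_union_image_inr]

/-- Lemma 2 of the paper: any PDS of `σ(G)` can be turned into a PDS at least as
large that contains `M ∪ {z1, z2}`. -/
theorem sigma_pds_enlarge {V : Type*} [Fintype V] (G : SimpleGraph V)
    (hconn : G.Connected) (hstar : ¬ IsStar G)
    (S1 : Set (SigmaVert V G)) (h1 : IsPDS (sigmaGraph G) S1) :
    ∃ S2 : Set (SigmaVert V G),
      IsPDS (sigmaGraph G) S2 ∧ S1.ncard ≤ S2.ncard ∧ sigmaClique G ⊆ S2 :=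
  sigma_pds_enlarge_general G hconn S1 h1
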